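/- Let d : ℝ³ → [0,∞) be a function and 0 < c₁ ≤ c₂ constants such that c₁(x² + y² + |z|) ≤ d(x,y,z)² ≤ c₂(x² + y² + |z|) for all (x,y,z) ∈ ℝ³. Let q : (0,2] × ℝ³ → (0,∞) be measurable and suppose: (i) (Chapman–Kolmogorov) for all s,t > 0 with s + t ≤ 2 and all k ∈ ℝ³, ∫_{ℝ³} q_s(g) q_t(g⁻¹·k) dg = q_{s+t}(k), where dg is Lebesgue measure and g⁻¹·k is computed in the Heisenberg group; (ii) there are constants 0 < C₁ ≤ C₂ such that for all t ∈ (0,2] and all g = (x,y,z) with r := √(x²+y²), C₁ (t⁴ + t³ r d(g))^{−1/2} exp(−d(g)²/(4t)) ≤ q_t(g) ≤ C₂ (t⁴ + t³ r d(g))^{−1/2} exp(−d(g)²/(4t)). Then there exists a constant C > 0 such that for all t ∈ (0,1) and all k = (x_k, y_k, z_k) ∈ ℝ³: ∫_{ℝ³} (x_g² + y_g²) q_t(g) q_{1−t}(g⁻¹·k) dg ≤ C (t² d(k)² + t) q₁(k), and moreover ∫₀¹ [ ∫_{ℝ³} (x_g² + y_g²) q_t(g) q_{1−t}(g⁻¹·k)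 dg / q₁(k) ] dt ≤ C (1 + x_k² + y_k² + |z_k|). -/

import Mathlib

open MeasureTheory ProbabilityTheory

noncomputable section

/-- The Heisenberg group as ℝ³. -/
abbrev H : Type := ℝ × ℝ × ℝ

/-- Entropy of `f` with respect to `μ`. -/
def Ent {α : Type*} [MeasurableSpace α] (μ : Measure α) (f : α → ℝ) : ℝ :=
  ∫ a, f a * Real.log (f a) ∂μ - (∫ a, f a ∂μ) * Real.log (∫ a, f a ∂μ)

/-- The Heisenberg group multiplication on ℝ³. -/
def Hmul (g h : H) : H :=
  (g.1 + h.1, g.2.1 + h.2.1, g.2.2 + h.2.2 + (g.1 * h.2.1 - g.2.1 * h.1) / 2)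

/-- The Heisenberg group inverse on ℝ³. -/
def Hinv (g : H) : H := (-g.1, -g.2.1, -g.2.2)

/-!
Split the Heisenberg group according to whether `d(g)² ≤ 4 (t d(k))²`. In the near region
`x² + y² ≤ d(g)² / c₁` is already of size `t² d(k)²`. In the far region the Gaussian factor of
`q_t(g)` pays for `x² + y²`: half of it becomes the factor of `q_{2t}(g)`, a quarter of it absorbs
`x² + y²` at the price of a factor `t`, and the last quarter leaves `exp (-t d(k)² / 4)`. Hence
`(x² + y²) q_t(g) ≤ α q_t(g) + β q_{2t}(g)`; integrating against `q_{1-t}(g⁻¹k)` with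
Chapman–Kolmogorov gives `α q₁(k) + β q_{1+t}(k)`, and the factor `exp (-t d(k)² / 4)` in `β`
is exactly what makes `q_{1+t}(k) ≤ C q₁(k) exp (t d(k)² / 4)` harmless.
-/

open Real Set

lemma mul_exp_neg_div_le {c r A s : ℝ} (hc : 0 < c) (hs : 0 < s) (hr : c * r ≤ A) :
    r * exp (-A / s) ≤ s / c * exp (-1) :=
  calc r * exp (-A / s) ≤ A / c * exp (-A / s) := by
        gcongr
        rwa [le_div_iff₀' hc]
    _ = s / c * (A / s * exp (-(A / s))) := by rw [neg_div]; field_simp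
    _ ≤ s / c * exp (-1) := by gcongr; exact mul_exp_neg_le_exp_neg_one _

lemma mul_exp_neg_le_of_far {c r A t D : ℝ} (hc : 0 < c) (ht : 0 < t)
    (hr : c * r ≤ A) (hfar : 4 * (t * D) ^ 2 < A) :
    r * exp (-A / (8 * t)) ≤ 16 * t / c * exp (-1) * exp (-(t * D ^ 2) / 4) := by
  have hsplit : exp (-A / (8 * t)) = exp (-A / (16 * t)) * exp (-A / (16 * t)) := by
    rw [← exp_add]
    congr 1
    field_simp
    ring
  have hdecay : exp (-A / (16 * t)) ≤ exp (-(t * D ^ 2) / 4) := by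
    rw [exp_le_exp, neg_div, neg_div, neg_le_neg_iff, div_le_div_iff₀ (by norm_num) (by positivity)]
    nlinarith
  rw [hsplit, ← mul_assoc]
  exact mul_le_mul (mul_exp_neg_div_le hc (by positivity) hr) hdecay (exp_pos _).le
    (by positivity)

lemma integral_le_of_le_add {α : Type*} [MeasurableSpace α] {μ : Measure α} {f u v : α → ℝ}
    {a b : ℝ} (hf : 0 ≤ f) (hu : Integrable u μ) (hv : Integrable v μ)
    (hfuv : ∀ x, f x ≤ a * u x + b * v x) :
    ∫ x, f x ∂μ ≤ a * (∫ x, u x ∂μ) + b * ∫ x, v x ∂μ := by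
  rw [← integral_const_mul, ← integral_const_mul, ← integral_add (hu.const_mul a) (hv.const_mul b)]
  exact integral_mono_of_nonneg (ae_of_all _ hf) ((hu.const_mul a).add (hv.const_mul b))
    (ae_of_all _ hfuv)

lemma setIntegral_Ioo_le_of_forall_mem_Icc {f : ℝ → ℝ} {a b M : ℝ} (hab : a ≤ b)
    (hf : ∀ t ∈ Ioo a b, f t ∈ Icc 0 M) : ∫ t in Ioo a b, f t ≤ M * (b - a) :=
  calc ∫ t in Ioo a b, f t ≤ ‖∫ t in Ioo a b, f t‖ := Real.le_norm_self _
    _ ≤ M * volume.real (Ioo a b) := norm_setIntegral_le_of_norm_le_const measure_Ioo_lt_top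
        fun t ht => (Real.norm_of_nonneg (hf t ht).1).trans_le (hf t ht).2
    _ = M * (b - a) := by rw [volume_real_Ioo_of_le hab]

/-- The common shape of the two-sided bounds (ii) on `q_t`, up to the constants `C₁`, `C₂`. -/
def heatProfile (d : H → ℝ) (t : ℝ) (g : H) : ℝ :=
  (√(t ^ 4 + t ^ 3 * √(g.1 ^ 2 + g.2.1 ^ 2) * d g))⁻¹ * exp (-d g ^ 2 / (4 * t))

section heatProfile

variable {d : H → ℝ} {t : ℝ} {g : H}

lemma heatProfile_pos (ht : 0 < t) (hd : 0 ≤ d g) : 0 < heatProfile d t g := by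
  unfold heatProfile
  have : 0 < t ^ 4 + t ^ 3 * √(g.1 ^ 2 + g.2.1 ^ 2) * d g := by positivity
  positivity

lemma pos_of_mul_heatProfile_le {C x : ℝ} (hC : 0 < C) (ht : 0 < t) (hd : 0 ≤ d g)
    (h : C * heatProfile d t g ≤ x) : 0 < x :=
  (mul_pos hC (heatProfile_pos ht hd)).trans_le h

lemma heatProfile_le_exp_mul_heatProfile_two_mul (ht : 0 < t) (hd : 0 ≤ d g) :
    heatProfile d t g ≤ 4 * exp (-d g ^ 2 / (8 * t)) * heatProfile d (2 * t) g := by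
  set A := t ^ 4 + t ^ 3 * √(g.1 ^ 2 + g.2.1 ^ 2) * d g
  have hA : 0 < A := by positivity
  have hA₂ : (2 * t) ^ 4 + (2 * t) ^ 3 * √(g.1 ^ 2 + g.2.1 ^ 2) * d g ≤ 4 ^ 2 * A := by
    have : 0 ≤ t ^ 3 * √(g.1 ^ 2 + g.2.1 ^ 2) * d g := by positivity
    linarith
  have hsqrt : (√A)⁻¹ ≤ 4 * (√((2 * t) ^ 4 + (2 * t) ^ 3 * √(g.1 ^ 2 + g.2.1 ^ 2) * d g))⁻¹ := by
    rw [← div_eq_mul_inv, le_div_iff₀ (by positivity), ← div_eq_inv_mul,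
      div_le_iff₀ (by positivity)]
    calc _ ≤ √(4 ^ 2 * A) := sqrt_le_sqrt hA₂
      _ = 4 * √A := by rw [sqrt_mul (by positivity), sqrt_sq (by norm_num)]
  have hexp : exp (-d g ^ 2 / (4 * t)) =
      exp (-d g ^ 2 / (8 * t)) * exp (-d g ^ 2 / (4 * (2 * t))) := by
    rw [← exp_add]
    congr 1
    field_simp
    ring
  unfold heatProfile
  rw [hexp]
  calc (√A)⁻¹ * (exp (-d g ^ 2 / (8 * t)) * exp (-d g ^ 2 / (4 * (2 * t))))
      ≤ 4 * (√((2 * t) ^ 4 + (2 * t) ^ 3 * √(g.1 ^ 2 + g.2.1 ^ 2) * d g))⁻¹ *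
          (exp (-d g ^ 2 / (8 * t)) * exp (-d g ^ 2 / (4 * (2 * t)))) := by gcongr
    _ = _ := by ring

lemma exp_mul_heatProfile_one_add_le (ht : 0 ≤ t) (hd : 0 ≤ d g) :
    exp (-(t * d g ^ 2) / 4) * heatProfile d (1 + t) g ≤ heatProfile d 1 g := by
  have hsqrt : (√((1 + t) ^ 4 + (1 + t) ^ 3 * √(g.1 ^ 2 + g.2.1 ^ 2) * d g))⁻¹ ≤
      (√(1 ^ 4 + 1 ^ 3 * √(g.1 ^ 2 + g.2.1 ^ 2) * d g))⁻¹ := by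
    gcongr <;> linarith
  have hexp : -(t * d g ^ 2) / 4 + -d g ^ 2 / (4 * (1 + t)) ≤ -d g ^ 2 / (4 * 1) := by
    have : d g ^ 2 / 4 - d g ^ 2 / (4 * (1 + t)) = t * d g ^ 2 / (4 * (1 + t)) := by
      field_simp
      ring
    have : t * d g ^ 2 / (4 * (1 + t)) ≤ t * d g ^ 2 / 4 := by
      gcongr
      linarith
    linarith [neg_div 4 (t * d g ^ 2), neg_div (4 * (1 + t)) (d g ^ 2), neg_div (4 * 1) (d g ^ 2)]
  unfold heatProfile
  calc exp (-(t * d g ^ 2) / 4) *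
        ((√((1 + t) ^ 4 + (1 + t) ^ 3 * √(g.1 ^ 2 + g.2.1 ^ 2) * d g))⁻¹ *
          exp (-d g ^ 2 / (4 * (1 + t))))
      = (√((1 + t) ^ 4 + (1 + t) ^ 3 * √(g.1 ^ 2 + g.2.1 ^ 2) * d g))⁻¹ *
          exp (-(t * d g ^ 2) / 4 + -d g ^ 2 / (4 * (1 + t))) := by rw [exp_add]; ring
    _ ≤ _ := by gcongr

lemma exp_mul_le_of_le_heatProfile_one_add {C₁ C₂ x y : ℝ} (hC₁ : 0 < C₁) (hC₂ : 0 ≤ C₂)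
    (ht : 0 ≤ t) (hd : 0 ≤ d g) (hx : x ≤ C₂ * heatProfile d (1 + t) g)
    (hy : C₁ * heatProfile d 1 g ≤ y) :
    exp (-(t * d g ^ 2) / 4) * x ≤ C₂ / C₁ * y :=
  calc exp (-(t * d g ^ 2) / 4) * x
      ≤ C₂ * (exp (-(t * d g ^ 2) / 4) * heatProfile d (1 + t) g) := by
        rw [mul_left_comm]
        gcongr
    _ ≤ C₂ * (y / C₁) := by
        gcongr
        rw [le_div_iff₀' hC₁]
        exact (mul_le_mul_of_nonneg_left (exp_mul_heatProfile_one_add_le ht hd) hC₁.le).trans hy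
    _ = C₂ / C₁ * y := by ring

end heatProfile

lemma sq_mul_le_near_add_far {d : H → ℝ} {q : ℝ → H → ℝ} {c₁ C₁ C₂ t D : ℝ} {g : H}
    (hc₁ : 0 < c₁) (hC₁ : 0 < C₁) (hC₂ : 0 ≤ C₂) (ht : 0 < t) (hd : 0 ≤ d g)
    (hdg : c₁ * (g.1 ^ 2 + g.2.1 ^ 2) ≤ d g ^ 2) (hq : 0 ≤ q t g)
    (hq_le : q t g ≤ C₂ * heatProfile d t g)
    (hq₂_ge : C₁ * heatProfile d (2 * t) g ≤ q (2 * t) g) :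
    (g.1 ^ 2 + g.2.1 ^ 2) * q t g ≤
      4 * (t * D) ^ 2 / c₁ * q t g +
        64 * C₂ / (c₁ * C₁) * exp (-1) * t * exp (-(t * D ^ 2) / 4) * q (2 * t) g := by
  have hq₂ : 0 ≤ q (2 * t) g := (pos_of_mul_heatProfile_le hC₁ (by positivity) hd hq₂_ge).le
  rcases le_or_gt (d g ^ 2) (4 * (t * D) ^ 2) with hnear | hfar
  · have hr : g.1 ^ 2 + g.2.1 ^ 2 ≤ 4 * (t * D) ^ 2 / c₁ := by
      rw [le_div_iff₀' hc₁]
      linarith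
    have : 0 ≤ 64 * C₂ / (c₁ * C₁) * exp (-1) * t * exp (-(t * D ^ 2) / 4) * q (2 * t) g := by
      positivity
    nlinarith
  · have hprofile : heatProfile d (2 * t) g ≤ q (2 * t) g / C₁ := by
      rwa [le_div_iff₀' hC₁]
    calc (g.1 ^ 2 + g.2.1 ^ 2) * q t g
        ≤ (g.1 ^ 2 + g.2.1 ^ 2) *
            (C₂ * (4 * exp (-d g ^ 2 / (8 * t)) * heatProfile d (2 * t) g)) := by
          gcongr
          exact hq_le.trans (by gcongr; exact heatProfile_le_exp_mul_heatProfile_two_mul ht hd)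
      _ = 4 * C₂ * ((g.1 ^ 2 + g.2.1 ^ 2) * exp (-d g ^ 2 / (8 * t))) *
            heatProfile d (2 * t) g := by
          ring
      _ ≤ 4 * C₂ * (16 * t / c₁ * exp (-1) * exp (-(t * D ^ 2) / 4)) * (q (2 * t) g / C₁) := by
          gcongr 4 * C₂ * ?_ * ?_
          · exact (heatProfile_pos (by positivity) hd).le
          · exact mul_exp_neg_le_of_far hc₁ ht hdg hfar
      _ = 64 * C₂ / (c₁ * C₁) * exp (-1) * t * exp (-(t * D ^ 2) / 4) * q (2 * t) g := by
          field_simp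
          ring
      _ ≤ _ := le_add_of_nonneg_left (by positivity)

lemma integral_sq_mul_bridge_mem_Icc {d : H → ℝ} {q : ℝ → H → ℝ} {c₁ C₁ C₂ : ℝ}
    (hd0 : ∀ g, 0 ≤ d g) (hc₁ : 0 < c₁) (hd : ∀ g : H, c₁ * (g.1 ^ 2 + g.2.1 ^ 2) ≤ d g ^ 2)
    (hCK : ∀ s t : ℝ, 0 < s → 0 < t → s + t ≤ 2 → ∀ k : H,
      (∫ g : H, q s g * q t (Hmul (Hinv g) k)) = q (s + t) k)
    (hC₁ : 0 < C₁)
    (hbound : ∀ t ∈ Ioc (0:ℝ) 2, ∀ g : H,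
      C₁ * heatProfile d t g ≤ q t g ∧ q t g ≤ C₂ * heatProfile d t g)
    {t : ℝ} (ht : t ∈ Ioo (0:ℝ) 1) (k : H) :
    ∫ g : H, (g.1 ^ 2 + g.2.1 ^ 2) * q t g * q (1 - t) (Hmul (Hinv g) k) ∈ Icc 0
      ((4 / c₁ + 64 * C₂ ^ 2 / (c₁ * C₁ ^ 2) * exp (-1)) * (t ^ 2 * d k ^ 2 + t) * q 1 k) := by
  obtain ⟨ht₀, ht₁⟩ := ht
  have hq : ∀ s ∈ Ioc (0:ℝ) 2, ∀ g, 0 < q s g := fun s hs g =>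
    pos_of_mul_heatProfile_le hC₁ hs.1 (hd0 g) (hbound s hs g).1
  have ht₂ : t ∈ Ioc (0:ℝ) 2 := ⟨ht₀, by linarith⟩
  have h2t : 2 * t ∈ Ioc (0:ℝ) 2 := ⟨by linarith, by linarith⟩
  have h1t : 1 - t ∈ Ioc (0:ℝ) 2 := ⟨by linarith, by linarith⟩
  have h1 : (1:ℝ) ∈ Ioc (0:ℝ) 2 := ⟨one_pos, one_le_two⟩
  have hC₂ : 0 ≤ C₂ := hC₁.le.trans <| le_of_mul_le_mul_right
    ((hbound 1 h1 k).1.trans (hbound 1 h1 k).2) (heatProfile_pos one_pos (hd0 k))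
  have hCK₁ : ∫ g, q t g * q (1 - t) (Hmul (Hinv g) k) = q 1 k := by
    simpa using hCK t (1 - t) ht₀ h1t.1 (by linarith) k
  have hCK₂ : ∫ g, q (2 * t) g * q (1 - t) (Hmul (Hinv g) k) = q (1 + t) k := by
    rw [hCK _ _ h2t.1 h1t.1 (by linarith) k]
    ring_nf
  have hf : ∀ g : H, 0 ≤ (g.1 ^ 2 + g.2.1 ^ 2) * q t g * q (1 - t) (Hmul (Hinv g) k) := fun g =>
    mul_nonneg (mul_nonneg (by positivity) (hq t ht₂ g).le) (hq _ h1t _).le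
  have hfar := exp_mul_le_of_le_heatProfile_one_add hC₁ hC₂ ht₀.le (hd0 k)
    (hbound _ ⟨by linarith, by linarith⟩ k).2 (hbound 1 h1 k).1
  refine ⟨integral_nonneg hf, ?_⟩
  calc ∫ g, (g.1 ^ 2 + g.2.1 ^ 2) * q t g * q (1 - t) (Hmul (Hinv g) k)
      ≤ 4 * (t * d k) ^ 2 / c₁ * (∫ g, q t g * q (1 - t) (Hmul (Hinv g) k)) +
          64 * C₂ / (c₁ * C₁) * exp (-1) * t * exp (-(t * d k ^ 2) / 4) *
            ∫ g, q (2 * t) g * q (1 - t) (Hmul (Hinv g) k) := by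
        refine integral_le_of_le_add hf (.of_integral_ne_zero ?_) (.of_integral_ne_zero ?_)
          fun g => ?_
        · exact hCK₁ ▸ (hq 1 h1 k).ne'
        · exact hCK₂ ▸ (hq _ ⟨by linarith, by linarith⟩ k).ne'
        · have := sq_mul_le_near_add_far (D := d k) hc₁ hC₁ hC₂ ht₀ (hd0 g) (hd g)
            (hq t ht₂ g).le (hbound t ht₂ g).2 (hbound _ h2t g).1
          have := mul_le_mul_of_nonneg_right this (hq _ h1t (Hmul (Hinv g) k)).le
          linarith
    _ = 4 / c₁ * (t * d k) ^ 2 * q 1 k +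
          64 * C₂ / (c₁ * C₁) * exp (-1) * t * (exp (-(t * d k ^ 2) / 4) * q (1 + t) k) := by
        rw [hCK₁, hCK₂]
        ring
    _ ≤ 4 / c₁ * (t * d k) ^ 2 * q 1 k +
          64 * C₂ / (c₁ * C₁) * exp (-1) * t * (C₂ / C₁ * q 1 k) := by
        gcongr
    _ ≤ _ := by
        have : 0 ≤ (4 / c₁ * t + 64 * C₂ ^ 2 / (c₁ * C₁ ^ 2) * exp (-1) * (t * d k) ^ 2) * q 1 k :=
          mul_nonneg (by positivity) (hq 1 h1 k).le
        have hγ : 64 * C₂ / (c₁ * C₁) * exp (-1) * t * (C₂ / C₁ * q 1 k) =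
            64 * C₂ ^ 2 / (c₁ * C₁ ^ 2) * exp (-1) * t * q 1 k := by
          field_simp
        linear_combination this + hγ

theorem bridge_control_general
    (d : H → ℝ) (hd0 : ∀ g, 0 ≤ d g)
    (c₁ c₂ : ℝ) (hc₁ : 0 < c₁)
    (hd : ∀ g : H, c₁ * (g.1 ^ 2 + g.2.1 ^ 2 + |g.2.2|) ≤ (d g) ^ 2 ∧
      (d g) ^ 2 ≤ c₂ * (g.1 ^ 2 + g.2.1 ^ 2 + |g.2.2|))
    (q : ℝ → H → ℝ)
    (hCK : ∀ s t : ℝ, 0 < s → 0 < t → s + t ≤ 2 → ∀ k : H,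
      (∫ g : H, q s g * q t (Hmul (Hinv g) k)) = q (s + t) k)
    (C₁ C₂ : ℝ) (hC₁ : 0 < C₁)
    (hbound : ∀ t ∈ Set.Ioc (0:ℝ) 2, ∀ g : H,
      C₁ * (Real.sqrt (t ^ 4 + t ^ 3 * Real.sqrt (g.1 ^ 2 + g.2.1 ^ 2) * d g))⁻¹ *
          Real.exp (-(d g) ^ 2 / (4 * t)) ≤ q t g ∧
      q t g ≤ C₂ * (Real.sqrt (t ^ 4 + t ^ 3 * Real.sqrt (g.1 ^ 2 + g.2.1 ^ 2) * d g))⁻¹ *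
          Real.exp (-(d g) ^ 2 / (4 * t))) :
    ∃ C > (0:ℝ),
      (∀ t ∈ Set.Ioo (0:ℝ) 1, ∀ k : H,
        (∫ g : H, (g.1 ^ 2 + g.2.1 ^ 2) * q t g * q (1 - t) (Hmul (Hinv g) k)) ≤
          C * (t ^ 2 * (d k) ^ 2 + t) * q 1 k) ∧
      ∀ k : H,
        (∫ t in Set.Ioo (0:ℝ) 1,
          (∫ g : H, (g.1 ^ 2 + g.2.1 ^ 2) * q t g * q (1 - t) (Hmul (Hinv g) k)) / q 1 k) ≤
          C * (1 + k.1 ^ 2 + k.2.1 ^ 2 + |k.2.2|) := by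
  have hbound' : ∀ t ∈ Ioc (0:ℝ) 2, ∀ g : H,
      C₁ * heatProfile d t g ≤ q t g ∧ q t g ≤ C₂ * heatProfile d t g := by
    simpa only [heatProfile, mul_assoc] using hbound
  have hq₁ : ∀ k, 0 < q 1 k := fun k =>
    pos_of_mul_heatProfile_le hC₁ one_pos (hd0 k) (hbound' 1 ⟨one_pos, one_le_two⟩ k).1
  have hdxy : ∀ g : H, c₁ * (g.1 ^ 2 + g.2.1 ^ 2) ≤ d g ^ 2 := fun g => by
    nlinarith [(hd g).1, abs_nonneg g.2.2]
  have hbridge := fun t (ht : t ∈ Ioo (0:ℝ) 1) k =>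
    integral_sq_mul_bridge_mem_Icc hd0 hc₁ hdxy hCK hC₁ hbound' ht k
  set C₀ := 4 / c₁ + 64 * C₂ ^ 2 / (c₁ * C₁ ^ 2) * exp (-1)
  have hC₀ : 0 < C₀ := by positivity
  refine ⟨C₀ * max 1 c₂, by positivity, fun t ht k => (hbridge t ht k).2.trans ?_, fun k => ?_⟩
  · have : 0 ≤ C₀ * ((t ^ 2 * d k ^ 2 + t) * q 1 k) :=
      mul_nonneg hC₀.le (mul_nonneg (by have := ht.1; positivity) (hq₁ k).le)
    nlinarith [le_max_left 1 c₂]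
  refine (setIntegral_Ioo_le_of_forall_mem_Icc (M := C₀ * (d k ^ 2 + 1)) zero_le_one
    fun t ht => ?_).trans ?_
  · obtain ⟨hI₀, hI⟩ := hbridge t ht k
    refine ⟨div_nonneg hI₀ (hq₁ k).le, (div_le_iff₀ (hq₁ k)).2 (hI.trans ?_)⟩
    have := (hq₁ k).le
    gcongr
    · exact mul_le_of_le_one_left (sq_nonneg _) (pow_le_one₀ ht.1.le ht.2.le)
    · exact ht.2.le
  · have hS : 0 ≤ k.1 ^ 2 + k.2.1 ^ 2 + |k.2.2| := by positivity
    rw [sub_zero, mul_one, mul_assoc]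
    gcongr
    nlinarith [(hd k).2, le_max_left 1 c₂, mul_le_mul_of_nonneg_right (le_max_right 1 c₂) hS]

theorem bridge_control
    (d : H → ℝ) (hd0 : ∀ g, 0 ≤ d g)
    (c₁ c₂ : ℝ) (hc₁ : 0 < c₁) (hc₁₂ : c₁ ≤ c₂)
    (hd : ∀ g : H, c₁ * (g.1 ^ 2 + g.2.1 ^ 2 + |g.2.2|) ≤ (d g) ^ 2 ∧
      (d g) ^ 2 ≤ c₂ * (g.1 ^ 2 + g.2.1 ^ 2 + |g.2.2|))
    (q : ℝ → H → ℝ)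
    (hqpos : ∀ t ∈ Set.Ioc (0:ℝ) 2, ∀ g : H, 0 < q t g)
    (hqmeas : Measurable fun p : ℝ × H => q p.1 p.2)
    (hCK : ∀ s t : ℝ, 0 < s → 0 < t → s + t ≤ 2 → ∀ k : H,
      (∫ g : H, q s g * q t (Hmul (Hinv g) k)) = q (s + t) k)
    (C₁ C₂ : ℝ) (hC₁ : 0 < C₁) (hC₁₂ : C₁ ≤ C₂)
    (hbound : ∀ t ∈ Set.Ioc (0:ℝ) 2, ∀ g : H,
      C₁ * (Real.sqrt (t ^ 4 + t ^ 3 * Real.sqrt (g.1 ^ 2 + g.2.1 ^ 2) * d g))⁻¹ *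
          Real.exp (-(d g) ^ 2 / (4 * t)) ≤ q t g ∧
      q t g ≤ C₂ * (Real.sqrt (t ^ 4 + t ^ 3 * Real.sqrt (g.1 ^ 2 + g.2.1 ^ 2) * d g))⁻¹ *
          Real.exp (-(d g) ^ 2 / (4 * t))) :
    ∃ C > (0:ℝ),
      (∀ t ∈ Set.Ioo (0:ℝ) 1, ∀ k : H,
        (∫ g : H, (g.1 ^ 2 + g.2.1 ^ 2) * q t g * q (1 - t) (Hmul (Hinv g) k)) ≤
          C * (t ^ 2 * (d k) ^ 2 + t) * q 1 k) ∧
      ∀ k : H,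
        (∫ t in Set.Ioo (0:ℝ) 1,
          (∫ g : H, (g.1 ^ 2 + g.2.1 ^ 2) * q t g * q (1 - t) (Hmul (Hinv g) k)) / q 1 k) ≤
          C * (1 + k.1 ^ 2 + k.2.1 ^ 2 + |k.2.2|) :=
  bridge_control_general d hd0 c₁ c₂ hc₁ hd q hCK C₁ C₂ hC₁ hbound
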